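/- Let n ∈ ℕ, let ω be a random vector in ℝ^n, and let γ > 1 and C₁, C₂ ∈ (0,∞). Suppose that for every convex 1-Lipschitz function f : ℝ^n → ℝ and every median M_f of f(ω) one has P(|f(ω) − M_f| ≥ t) ≤ C₁ exp(−t^γ/C₂) for all t ≥ 0. Then for every η ∈ (0,∞), every convex set A ⊆ ℝ^n and every t ≥ 0, P(ω ∈ A)^η · P(d(ω, A) > t) ≤ C₁^{1+η} exp(−ε_η t^γ/C₂), where ε_η := η / (1 + η^{1/(γ−1)})^{γ−1}. -/

import Mathlib

/-!
Let `f := d(·, A)`, which is convex and `1`-Lipschitz, and let `M ≥ 0` be a median of `f(ω)`.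
On `{ω ∈ A}` we have `|f(ω) - M| = M`, and on `{d(ω, A) > t}` we have
`|f(ω) - M| ≥ t - M`, so concentration bounds `P(ω ∈ A)` by `C₁ exp(-m^γ/C₂)` and
`P(d(ω, A) > t)` by `C₁ exp(-(t-m)^γ/C₂)` with `m = min M t`. Multiplying, it remains to
minimise `η m^γ + (t - m)^γ` over `m ∈ [0, t]`; by convexity of `x ↦ x^γ`
the minimum is `ε_η t^γ`, attained at `m = t / (1 + η^(1/(γ-1)))`.
-/

open MeasureTheory Metric Set Filter Topology
open scoped ENNReal

theorem le_measure_Iic_of_forall_gt {α : Type*} [LinearOrder α] [TopologicalSpace α]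
    [OrderTopology α] [FirstCountableTopology α] [DenselyOrdered α] [NoMaxOrder α]
    [MeasurableSpace α] [OpensMeasurableSpace α] {μ : Measure α} [IsFiniteMeasure μ]
    {a : α} {c : ℝ≥0∞} (h : ∀ r > a, c ≤ μ (Iic r)) : c ≤ μ (Iic a) := by
  have hlim := tendsto_measure_biInter_gt (μ := μ) (s := Iic) (a := a)
    (fun r _ ↦ measurableSet_Iic.nullMeasurableSet) (fun _ _ _ ↦ Iic_subset_Iic.2)
    (let ⟨r, hr⟩ := exists_gt a; ⟨r, hr, measure_ne_top μ _⟩)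
  have : ⋂ r > a, Iic r = Iic a := by
    ext x; simp only [mem_iInter, mem_Iic]; exact forall_gt_imp_ge_iff_le_of_dense
  rw [this] at hlim
  exact ge_of_tendsto hlim (eventually_nhdsWithin_of_forall h)

theorem le_measure_Ici_of_forall_lt {α : Type*} [LinearOrder α] [TopologicalSpace α]
    [OrderTopology α] [FirstCountableTopology α] [DenselyOrdered α] [NoMinOrder α]
    [MeasurableSpace α] [OpensMeasurableSpace α] {μ : Measure α} [IsFiniteMeasure μ]
    {a : α} {c : ℝ≥0∞} (h : ∀ r < a, c ≤ μ (Ici r)) : c ≤ μ (Ici a) :=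
  have : IsFiniteMeasure (α := αᵒᵈ) μ := ‹_›
  le_measure_Iic_of_forall_gt (α := αᵒᵈ) (μ := μ) (a := OrderDual.toDual a) h

theorem ENNReal.lt_half_iff_half_lt_of_add_eq_one {a b : ℝ≥0∞} (h : a + b = 1) :
    a < 1 / 2 ↔ 1 / 2 < b := by
  have hb : b ≠ ∞ := ne_top_of_le_ne_top one_ne_top (h ▸ le_add_self)
  have := ENNReal.add_lt_add_iff_left (a := 1 / 2) (b := 1 / 2) (c := b) (by simp)
  rw [ENNReal.add_halves] at this
  rw [← ENNReal.add_lt_add_iff_right hb, h, this]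

theorem exists_half_le_measure_Ici_Iic (μ : Measure ℝ) [IsProbabilityMeasure μ] :
    ∃ M, 1 / 2 ≤ μ (Ici M) ∧ 1 / 2 ≤ μ (Iic M) := by
  have hsplit (m : ℝ) : μ (Iic m) < 1 / 2 ↔ 1 / 2 < μ (Ioi m) :=
    ENNReal.lt_half_iff_half_lt_of_add_eq_one <| by
      rw [← compl_Iic, measure_add_measure_compl measurableSet_Iic, measure_univ]
  have hhalf : (1 / 2 : ℝ≥0∞) < μ univ := by simp
  obtain ⟨x₁, hx₁⟩ := ((tendsto_measure_Iic_atTop μ).eventually (lt_mem_nhds hhalf)).exists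
  obtain ⟨x₀, hx₀⟩ :=
    eventually_atBot.1 ((tendsto_measure_Ici_atBot μ).eventually (lt_mem_nhds hhalf))
  set S := {m | 1 / 2 ≤ μ (Iic m)}
  have hS : S.Nonempty := ⟨x₁, hx₁.le⟩
  have hSbdd : x₀ ∈ lowerBounds S := fun m hm ↦ not_lt.1 fun hmx₀ ↦ not_lt.2 hm <|
    (hsplit m).2 <| (hx₀ x₀ le_rfl).trans_le (measure_mono (Ici_subset_Ioi.2 hmx₀))
  refine ⟨sInf S, le_measure_Ici_of_forall_lt fun r hr ↦ ?_,
    le_measure_Iic_of_forall_gt fun r hr ↦ ?_⟩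
  · have hrS : r ∉ S := notMem_of_lt_csInf hr ⟨x₀, hSbdd⟩
    exact ((hsplit r).1 (not_le.1 hrS)).le.trans (measure_mono Ioi_subset_Ici_self)
  · obtain ⟨s, hsS, hsr⟩ := exists_lt_of_csInf_lt hS hr
    exact hsS.trans (measure_mono (Iic_subset_Iic.2 hsr.le))

theorem exists_median {Ω : Type*} [MeasurableSpace Ω] (P : Measure Ω) [IsProbabilityMeasure P]
    {X : Ω → ℝ} (hX : Measurable X) :
    ∃ M : ℝ, 1 / 2 ≤ P {x | M ≤ X x} ∧ 1 / 2 ≤ P {x | X x ≤ M} := by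
  have := Measure.isProbabilityMeasure_map (μ := P) hX.aemeasurable
  obtain ⟨M, hge, hle⟩ := exists_half_le_measure_Ici_Iic (P.map X)
  rw [Measure.map_apply hX measurableSet_Ici] at hge
  rw [Measure.map_apply hX measurableSet_Iic] at hle
  exact ⟨M, hge, hle⟩

theorem convexOn_infDist {E : Type*} [NormedAddCommGroup E] [NormedSpace ℝ E] {A : Set E}
    (hA : Convex ℝ A) : ConvexOn ℝ univ (infDist · A) := by
  rcases A.eq_empty_or_nonempty with rfl | hAne
  · simpa only [infDist_empty] using convexOn_const 0 convex_univ
  refine ⟨convex_univ, fun x _ y _ a b ha hb hab ↦ le_of_forall_pos_le_add fun ε hε ↦ ?_⟩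
  obtain ⟨x', hx'A, hx'⟩ := (infDist_lt_iff hAne).1 (lt_add_of_pos_right (infDist x A) hε)
  obtain ⟨y', hy'A, hy'⟩ := (infDist_lt_iff hAne).1 (lt_add_of_pos_right (infDist y A) hε)
  calc infDist (a • x + b • y) A ≤ dist (a • x + b • y) (a • x' + b • y') :=
        infDist_le_dist_of_mem (hA hx'A hy'A ha hb hab)
    _ ≤ a * dist x x' + b * dist y y' := by
        refine (dist_add_add_le _ _ _ _).trans_eq ?_
        rw [dist_smul₀, dist_smul₀, Real.norm_of_nonneg ha, Real.norm_of_nonneg hb]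
    _ ≤ a * (infDist x A + ε) + b * (infDist y A + ε) := by gcongr
    _ = a • infDist x A + b • infDist y A + ε := by
        simp only [smul_eq_mul]; linear_combination ε * hab

theorem mul_rpow_le_mul_rpow_add_rpow_sub {γ η m t : ℝ} (hγ : 1 < γ) (hη : 0 < η)
    (hm : 0 ≤ m) (hmt : m ≤ t) :
    η / (1 + η ^ (1 / (γ - 1))) ^ (γ - 1) * t ^ γ ≤ η * m ^ γ + (t - m) ^ γ := by
  set β := η ^ (1 / (γ - 1))
  have hβ : 0 < β := by positivity
  have hβη : β ^ (γ - 1) = η := by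
    rw [← Real.rpow_mul hη.le, one_div_mul_cancel (by linarith), Real.rpow_one]
  have hc : 0 < (1 + β) ^ (γ - 1) := by positivity
  have hpow : ∀ x : ℝ, 0 < x → x ^ γ = x ^ (γ - 1) * x := fun x hx ↦ by
    rw [Real.rpow_sub_one hx.ne', div_mul_cancel₀ _ hx.ne']
  -- Jensen for `x ↦ x ^ γ` with weights `1 / (1 + β)`, `β / (1 + β)`: the minimiser of
  -- `η m ^ γ + (t - m) ^ γ` splits `t` in exactly these proportions.
  have htm : 0 ≤ t - m := sub_nonneg.2 hmt
  have hjensen := (convexOn_rpow hγ.le).2 (mem_Ici.2 (by positivity : 0 ≤ (1 + β) * m))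
    (mem_Ici.2 (by positivity : 0 ≤ (1 + β) * (t - m) / β))
    (by positivity : 0 ≤ 1 / (1 + β)) (by positivity : 0 ≤ β / (1 + β)) (by field_simp)
  have hpt : 1 / (1 + β) * ((1 + β) * m) + β / (1 + β) * ((1 + β) * (t - m) / β) = t := by
    field_simp; ring
  simp only [smul_eq_mul] at hjensen
  rw [hpt, Real.mul_rpow (by positivity) hm,
    Real.div_rpow (by positivity) hβ.le,
    Real.mul_rpow (by positivity) htm, hpow _ (by positivity : 0 < 1 + β),
    hpow β hβ, hβη] at hjensen
  rw [div_mul_eq_mul_div, div_le_iff₀ hc]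
  calc η * t ^ γ
        ≤ η * ((1 + β) ^ (γ - 1) * m ^ γ + (1 + β) ^ (γ - 1) * (t - m) ^ γ / η) := by
        gcongr; convert hjensen using 1; field_simp
    _ = (η * m ^ γ + (t - m) ^ γ) * (1 + β) ^ (γ - 1) := by field_simp

theorem rpow_mul_le_rpow_one_add_mul_exp {p q C a b η : ℝ} (hC : 0 < C) (hη : 0 ≤ η)
    (hp0 : 0 ≤ p) (hp : p ≤ C * Real.exp a) (hq : q ≤ C * Real.exp b) :
    p ^ η * q ≤ C ^ (1 + η) * Real.exp (η * a + b) := by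
  calc p ^ η * q ≤ (C * Real.exp a) ^ η * (C * Real.exp b) := by
        refine (mul_le_mul_of_nonneg_left hq (Real.rpow_nonneg hp0 η)).trans ?_
        exact mul_le_mul_of_nonneg_right (Real.rpow_le_rpow hp0 hp hη) (by positivity)
    _ = C ^ (1 + η) * Real.exp (η * a + b) := by
        rw [Real.mul_rpow hC.le (Real.exp_nonneg a), ← Real.exp_mul, Real.rpow_add hC,
          Real.rpow_one, Real.exp_add]
        ring_nf

/-- Under median concentration for convex `1`-Lipschitz functions,
for every `η > 0`, every convex set `A` and every `t ≥ 0` one has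
`P(ω ∈ A)^η · P(d(ω,A) > t) ≤ C₁^(1+η) exp(-ε_η t^γ / C₂)` with
`ε_η = η / (1 + η^(1/(γ-1)))^(γ-1)`. -/
theorem stmt_2
    {Ω : Type*} [MeasurableSpace Ω] (P : Measure Ω) [IsProbabilityMeasure P]
    (n : ℕ) (ω : Ω → EuclideanSpace ℝ (Fin n)) (hω : Measurable ω)
    (γ C₁ C₂ : ℝ) (hγ : 1 < γ) (hC₁ : 0 < C₁) (hC₂ : 0 < C₂)
    (hconc : ∀ f : EuclideanSpace ℝ (Fin n) → ℝ,
      ConvexOn ℝ Set.univ f → LipschitzWith 1 f →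
      ∀ Mf : ℝ,
        (1/2 : ℝ≥0∞) ≤ P {x | Mf ≤ f (ω x)} →
        (1/2 : ℝ≥0∞) ≤ P {x | f (ω x) ≤ Mf} →
        ∀ t : ℝ, 0 ≤ t →
          (P {x | t ≤ |f (ω x) - Mf|}).toReal ≤ C₁ * Real.exp (-(t ^ γ) / C₂)) :
    ∀ η : ℝ, 0 < η →
      ∀ A : Set (EuclideanSpace ℝ (Fin n)), Convex ℝ A →
        ∀ t : ℝ, 0 ≤ t →
          (P {x | ω x ∈ A}).toReal ^ η * (P {x | t < infDist (ω x) A}).toReal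
            ≤ C₁ ^ (1 + η) *
              Real.exp (-((η / (1 + η ^ (1/(γ-1))) ^ (γ-1)) * t ^ γ) / C₂) := by
  intro η hη A hA t ht
  obtain ⟨M, hMge, hMle⟩ := exists_median P ((continuous_infDist_pt A).measurable.comp hω)
  have hM : 0 ≤ M := by
    obtain ⟨x, hx⟩ := nonempty_of_measure_ne_zero
      (ne_of_gt ((ENNReal.half_pos one_ne_zero).trans_le hMle))
    exact infDist_nonneg.trans hx
  have htail := hconc (infDist · A) (convexOn_infDist hA) (lipschitz_infDist_pt A) M hMge hMle
  set m := min M t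
  have hin : (P {x | ω x ∈ A}).toReal ≤ C₁ * Real.exp (-(m ^ γ) / C₂) := by
    refine (measureReal_mono fun x (hx : ω x ∈ A) ↦ ?_).trans (htail m (le_min hM ht))
    simp [infDist_zero_of_mem hx, abs_of_nonneg hM, m]
  have hfar :
      (P {x | t < infDist (ω x) A}).toReal ≤ C₁ * Real.exp (-((t - m) ^ γ) / C₂) := by
    refine (measureReal_mono fun x (hx : t < infDist (ω x) A) ↦ ?_).trans
      (htail (t - m) (sub_nonneg.2 (min_le_right M t)))
    show t - min M t ≤ |infDist (ω x) A - M|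
    rcases min_cases M t with ⟨hm, -⟩ | ⟨hm, -⟩ <;> rw [hm]
    · linarith [le_abs_self (infDist (ω x) A - M)]
    · simp
  refine (rpow_mul_le_rpow_one_add_mul_exp hC₁ hη.le ENNReal.toReal_nonneg hin hfar).trans ?_
  gcongr
  rw [mul_div_assoc', ← add_div]
  gcongr
  linarith [mul_rpow_le_mul_rpow_add_rpow_sub hγ hη (le_min hM ht) (min_le_right M t)]
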